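/- arXiv:2605.28535 — 4 statements merged into one kernel-verified Lean document; each statement's English description precedes it below -/
import Mathlib

section
/- Let D be a finite directed multigraph and φ : X → U a labeling. For each weakly connected component C of D fix a basepoint r_C ∈ C and set U_C = Span_F{φ(x) − φ(r_C) : x ∈ C}. Then rank(∂_φ) = dim(Σ_C U_C), the dimension of the sum of the subspaces U_C over all components. -/
/-- Geometric description of the rank:
`rank(∂_φ) = dim (Σ_C U_C)` where `U_C = Span{φ(x) − φ(r_C) : x ∈ C}`. -/
theorem stmt_4 (F X E U : Type*) [Field F] [Fintype X] [Fintype E]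
    [DecidableEq X] [DecidableEq E] [AddCommGroup U] [Module F U]
    (s t : E → X) (φ : X → U)
    (G : SimpleGraph X)
    (hG : G = SimpleGraph.fromRel (fun x y => ∃ e, s e = x ∧ t e = y))
    (dφ : (E → F) →ₗ[F] U)
    (hdφ : ∀ e, dφ (Pi.single e 1) = φ (t e) - φ (s e))
    (r : G.ConnectedComponent → X)
    (hr : ∀ C, G.connectedComponentMk (r C) = C) :
    Module.finrank F (LinearMap.range dφ) =
      Module.finrank F
        ((⨆ C : G.ConnectedComponent,
          Submodule.span F
            {u : U | ∃ x, G.connectedComponentMk x = C ∧ u = φ x - φ (r C)} : Submodule F U)) := by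
  have key : LinearMap.range dφ =
      (⨆ C : G.ConnectedComponent,
          Submodule.span F
            {u : U | ∃ x, G.connectedComponentMk x = C ∧ u = φ x - φ (r C)} : Submodule F U) := by
    apply le_antisymm
    · rintro v ⟨f, rfl⟩
      have hf : f = ∑ e, f e • (Pi.single e 1 : E → F) := by
        ext e'
        simp [Pi.single_apply]
      rw [hf, map_sum]
      apply Submodule.sum_mem
      intro e _
      rw [map_smul, hdφ]
      apply Submodule.smul_mem
      set C := G.connectedComponentMk (s e) with hC
      have hts : G.connectedComponentMk (t e) = C := by
        by_cases h : s e = t e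
        · rw [hC, h]
        · apply SimpleGraph.ConnectedComponent.sound
          apply SimpleGraph.Adj.reachable
          rw [hG]
          exact ⟨fun h' => h h'.symm, Or.inr ⟨e, rfl, rfl⟩⟩
      have h1 : φ (t e) - φ (r C) ∈
          Submodule.span F {u : U | ∃ x, G.connectedComponentMk x = C ∧ u = φ x - φ (r C)} :=
        Submodule.subset_span ⟨t e, hts, rfl⟩
      have h2 : φ (s e) - φ (r C) ∈
          Submodule.span F {u : U | ∃ x, G.connectedComponentMk x = C ∧ u = φ x - φ (r C)} :=
        Submodule.subset_span ⟨s e, rfl, rfl⟩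
      have := sub_mem (le_iSup (fun C => Submodule.span F
            {u : U | ∃ x, G.connectedComponentMk x = C ∧ u = φ x - φ (r C)}) C h1)
        (le_iSup (fun C => Submodule.span F
            {u : U | ∃ x, G.connectedComponentMk x = C ∧ u = φ x - φ (r C)}) C h2)
      simpa using this
    · have walk_mem : ∀ a b : X, G.Walk a b → φ b - φ a ∈ LinearMap.range dφ := by
        intro a b w
        induction w with
        | nil => simp
        | @cons a c b h p ih =>
          have hstep : φ c - φ a ∈ LinearMap.range dφ := by
            rw [hG] at h
            rw [SimpleGraph.fromRel_adj] at h
            obtain ⟨hne, h | h⟩ := h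
            · obtain ⟨e, he1, he2⟩ := h
              exact ⟨Pi.single e 1, by rw [hdφ, he1, he2]⟩
            · obtain ⟨e, he1, he2⟩ := h
              refine ⟨-Pi.single e 1, ?_⟩
              rw [map_neg, hdφ, he1, he2]
              abel
          have := add_mem ih hstep
          simpa using this
      apply iSup_le
      intro C
      rw [Submodule.span_le]
      rintro u ⟨x, hx, rfl⟩
      have hreach : G.Reachable (r C) x := by
        apply SimpleGraph.ConnectedComponent.exact
        rw [hr, hx]
      obtain ⟨w⟩ := hreach
      exact walk_mem _ _ w
  rw [key]
end

section
/- Let D be a connected finite directed multigraph (c(D) = 1) and φ : X → U a labeling. Then δ_φ = 0 if and only if the family (φ(x))_{x ∈ X} is affinely independent in U. -/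
/-- For a connected multigraph, `δ_φ = 0` iff the labels `(φ(x))_{x∈X}` are
affinely independent in `U`. -/
theorem stmt_5 (F X E U : Type*) [Field F] [Fintype X] [Fintype E]
    [DecidableEq X] [DecidableEq E] [AddCommGroup U] [Module F U]
    (s t : E → X) (φ : X → U)
    (G : SimpleGraph X)
    (hG : G = SimpleGraph.fromRel (fun x y => ∃ e, s e = x ∧ t e = y))
    (hconn : Nat.card G.ConnectedComponent = 1)
    (B : (E → F) →ₗ[F] (X → F))
    (hB : ∀ e, B (Pi.single e 1) = Pi.single (t e) 1 - Pi.single (s e) 1)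
    (φhat : (X → F) →ₗ[F] U)
    (hφ : ∀ x, φhat (Pi.single x 1) = φ x) :
    Module.finrank F
        (LinearMap.range B ⊓ LinearMap.ker φhat : Submodule F (X → F)) = 0 ↔
      AffineIndependent F φ := by
  obtain ⟨hsub, hne⟩ := Nat.card_eq_one_iff_unique.mp hconn
  have hreach : ∀ x y : X, G.Reachable x y := fun x y =>
    (SimpleGraph.ConnectedComponent.eq).mp (Subsingleton.elim _ _)
  have hXne : Nonempty X := by
    obtain ⟨c⟩ := hne
    obtain ⟨x, -⟩ := c.exists_rep
    exact ⟨x⟩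
  -- representation of a function as a sum of singles
  have hφhat : ∀ f : X → F, φhat f = ∑ x, f x • φ x := by
    intro f
    have hf : f = ∑ x, f x • (Pi.single x 1 : X → F) := by
      funext j
      simp [Pi.single_apply, Finset.sum_apply]
    conv_lhs => rw [hf]
    simp [hφ]
  have hsumB : ∀ g : E → F, ∑ x, B g x = 0 := by
    intro g
    have hg : g = ∑ e, g e • (Pi.single e 1 : E → F) := by
      funext j
      simp [Pi.single_apply, Finset.sum_apply]
    rw [hg, map_sum]
    simp only [map_smul, hB]
    simp only [Finset.sum_apply, Pi.smul_apply, Pi.sub_apply, Pi.single_apply,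
      smul_eq_mul, mul_sub, Finset.sum_sub_distrib]
    rw [Finset.sum_comm]
    simp
    rw [Finset.sum_comm]
    simp
  have hmem : ∀ x y : X, Pi.single y 1 - Pi.single x 1 ∈ LinearMap.range B := by
    intro x y
    obtain ⟨w⟩ := hreach x y
    induction w with
    | nil => simp
    | @cons a b c h p ih =>
      have hb : Pi.single b (1:F) - Pi.single a 1 ∈ LinearMap.range B := by
        rw [hG, SimpleGraph.fromRel_adj] at h
        rcases h.2 with ⟨e, he1, he2⟩ | ⟨e, he1, he2⟩
        · exact ⟨Pi.single e 1, by rw [hB, he1, he2]⟩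
        · exact ⟨-Pi.single e 1, by rw [map_neg, hB, he1, he2, neg_sub]⟩
      have := add_mem ih hb
      simpa using this
  have hrange : ∀ f : X → F, f ∈ LinearMap.range B ↔ ∑ x, f x = 0 := by
    intro f
    constructor
    · rintro ⟨g, rfl⟩; exact hsumB g
    · intro hf
      obtain ⟨x₀⟩ := hXne
      have hrep : f = ∑ x, f x • (Pi.single x (1:F) - Pi.single x₀ 1) := by
        funext j
        simp only [Finset.sum_apply, Pi.smul_apply, Pi.sub_apply, Pi.single_apply,
          smul_eq_mul, mul_sub, Finset.sum_sub_distrib]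
        simp [← Finset.sum_mul, hf]
      rw [hrep]
      exact Submodule.sum_mem _ fun x _ => Submodule.smul_mem _ _ (hmem x₀ x)
  have hwv : ∀ w : X → F, (∑ i, w i = 0) → Finset.univ.weightedVSub φ w = φhat w := by
    intro w hw0
    rw [Finset.weightedVSub_eq_weightedVSubOfPoint_of_sum_eq_zero _ _ _ hw0 (0 : U),
      Finset.weightedVSubOfPoint_apply]
    simp [hφhat, vsub_eq_sub]
  rw [Submodule.finrank_eq_zero, affineIndependent_iff_of_fintype]
  constructor
  · intro h w hw0 hv i
    have hm : w ∈ LinearMap.range B ⊓ LinearMap.ker φhat := by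
      rw [Submodule.mem_inf]
      exact ⟨(hrange w).mpr hw0, by rw [LinearMap.mem_ker, ← hwv w hw0, hv]⟩
    rw [h, Submodule.mem_bot] at hm
    simp [hm]
  · intro h
    rw [eq_bot_iff]
    rintro f ⟨hf1, hf2⟩
    have hsum : ∑ x, f x = 0 := (hrange f).mp hf1
    have hv : Finset.univ.weightedVSub φ f = (0 : U) := by
      rw [hwv f hsum]; exact hf2
    have := h f hsum hv
    simp only [Submodule.mem_bot]
    funext i
    exact this i
end

section
/- Let T be a spanning forest of D. For each non-tree edge e ∈ E \ T, define the topological cycle Z_e = 1_e − F[s(e), t(e)]. Then the family {Z_e}_{e ∈ E\T} is an F-basis of Ker(B_D). -/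
/-- Fundamental-cycle basis: given a spanning forest `T` (with
`|T| + c(D) = |X|`) and signed path vectors `P e` supported on `T` with
`B_D(P e) = 1_{t e} − 1_{s e}`, the topological cycles
`Z_e = 1_e − P e` (for `e ∉ T`) form a basis of `Ker(B_D)`. -/
theorem stmt_7 (F X E : Type*) [Field F] [Fintype X] [Fintype E]
    [DecidableEq X] [DecidableEq E]
    (s t : E → X)
    (G : SimpleGraph X)
    (hG : G = SimpleGraph.fromRel (fun x y => ∃ e, s e = x ∧ t e = y))
    (B : (E → F) →ₗ[F] (X → F))
    (hB : ∀ e, B (Pi.single e 1) = Pi.single (t e) 1 - Pi.single (s e) 1)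
    (hrank : Module.finrank F (LinearMap.range B) + Nat.card G.ConnectedComponent =
      Fintype.card X)
    (T : Finset E)
    (hT : T.card + Nat.card G.ConnectedComponent = Fintype.card X)
    (P : {e : E // e ∉ T} → (E → F))
    (hsupp : ∀ i, ∀ f ∉ T, P i f = 0)
    (hP : ∀ i : {e : E // e ∉ T},
      B (P i) = Pi.single (t i.1) 1 - Pi.single (s i.1) 1) :
    LinearIndependent F
        (fun i : {e : E // e ∉ T} => (Pi.single i.1 1 : E → F) - P i) ∧
      Submodule.span F
          (Set.range (fun i : {e : E // e ∉ T} =>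
            (Pi.single i.1 1 : E → F) - P i)) = LinearMap.ker B := by
  classical
  set Z : {e : E // e ∉ T} → (E → F) := fun i => (Pi.single i.1 1 : E → F) - P i with hZ
  have hmem : ∀ i, Z i ∈ LinearMap.ker B := by
    intro i
    simp [Z, LinearMap.mem_ker, map_sub, hB, hP]
  -- linear independence via the projection onto non-tree coordinates
  have hcomp : (⇑(LinearMap.funLeft F F (fun j : {e : E // e ∉ T} => (j : E)))) ∘ Z
      = fun i => (Pi.single i 1 : {e : E // e ∉ T} → F) := by
    funext i j
    simp only [Function.comp_apply, LinearMap.funLeft_apply, Z, Pi.sub_apply,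
      hsupp i j.1 j.2, sub_zero, Pi.single_apply]
    by_cases h : j = i
    · simp [h]
    · rw [if_neg h, if_neg (fun hc => h (Subtype.ext hc))]
  have hli : LinearIndependent F Z := by
    apply LinearIndependent.of_comp
      (LinearMap.funLeft F F (fun j : {e : E // e ∉ T} => (j : E)))
    rw [hcomp]
    have := (Pi.basisFun F {e : E // e ∉ T}).linearIndependent
    convert this using 1
    funext i
    rw [Pi.basisFun_apply]
  refine ⟨hli, ?_⟩
  have hle : Submodule.span F (Set.range Z) ≤ LinearMap.ker B := by
    rw [Submodule.span_le]
    rintro _ ⟨i, rfl⟩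
    exact hmem i
  have hcard : Fintype.card {e : E // e ∉ T} = Fintype.card E - T.card := by
    rw [Fintype.card_subtype_compl, Fintype.card_coe]
  have hTle : T.card ≤ Fintype.card E := T.card_le_univ
  have hrn : Module.finrank F (LinearMap.range B) + Module.finrank F (LinearMap.ker B)
      = Fintype.card E := by
    rw [LinearMap.finrank_range_add_finrank_ker, Module.finrank_fintype_fun_eq_card]
  have hspan : Module.finrank F (Submodule.span F (Set.range Z))
      = Fintype.card {e : E // e ∉ T} := finrank_span_eq_card hli
  have hker : Module.finrank F (LinearMap.ker B) ≤
      Module.finrank F (Submodule.span F (Set.range Z)) := by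
    rw [hspan, hcard]; omega
  exact Submodule.eq_of_le_of_finrank_le hle hker
end

section
/- Let D be a finite directed multigraph and φ a labeling. For any r ∈ Im(B_D) ∩ Ker(φ̂), there exists ζ ∈ Ker(∂_φ) with B_D(ζ) = r. -/
/-- Lifting lemma: every `r ∈ Im(B_D) ∩ Ker(φ̂)` lifts to some
`ζ ∈ Ker(∂_φ)` with `B_D(ζ) = r`. -/
theorem stmt_8 (F X E U : Type*) [Field F] [Fintype X] [Fintype E]
    [DecidableEq X] [DecidableEq E] [AddCommGroup U] [Module F U]
    (s t : E → X) (φ : X → U)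
    (B : (E → F) →ₗ[F] (X → F))
    (hB : ∀ e, B (Pi.single e 1) = Pi.single (t e) 1 - Pi.single (s e) 1)
    (φhat : (X → F) →ₗ[F] U)
    (hφ : ∀ x, φhat (Pi.single x 1) = φ x)
    (dφ : (E → F) →ₗ[F] U)
    (hdφ : ∀ e, dφ (Pi.single e 1) = φ (t e) - φ (s e)) :
    ∀ r ∈ (LinearMap.range B ⊓ LinearMap.ker φhat : Submodule F (X → F)),
      ∃ ζ : E → F, dφ ζ = 0 ∧ B ζ = r := by
  have hcomp : dφ = φhat.comp B := by
    apply LinearMap.pi_ext'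
    intro e
    apply LinearMap.ext_ring
    simp [hdφ, hB, hφ, smul_sub]
  rintro r ⟨⟨ζ, rfl⟩, hker⟩
  exact ⟨ζ, by simp [hcomp, LinearMap.mem_ker.mp hker], rfl⟩
end
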